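/- arXiv:1711.06858 — 5 statements merged into one kernel-verified Lean document; each statement's English description precedes it below -/
import Mathlib

section
/- Let f ∈ F[w_1,…,w_{h−1}] be a nonzero homogeneous polynomial of total degree d with d > s. Then the smallest F-subspace of F[w_1,…,w_{h−1}] that contains f and is stable under all the operators X_{ij} (0 ≤ i, j ≤ h−1) is the whole polynomial ring F[w_1,…,w_{h−1}]. -/
/-- With the convention `w₀ = 1`, the element `w_i` of `F[w₁,…,w_m]`, for `i : Fin (m+1)`. -/
noncomputable def Wvar (F : Type*) [CommRing F] {m : ℕ} (i : Fin (m + 1)) :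
    MvPolynomial (Fin m) F :=
  if h : i = 0 then 1 else MvPolynomial.X (i.pred h)

/-- The operator `f ↦ s·f − Σ_{l=1}^{m} w_l·∂f/∂w_l`. -/
noncomputable def EulerOp (F : Type*) [CommRing F] {m : ℕ} (s : ℤ)
    (f : MvPolynomial (Fin m) F) : MvPolynomial (Fin m) F :=
  s • f - ∑ l : Fin m, MvPolynomial.X l * MvPolynomial.pderiv l f

/-- The operators `X_{ij}` (`0 ≤ i, j ≤ m`) on `F[w₁,…,w_m]`:
`X_{ij} f = w_i·∂f/∂w_j` if `j ≠ 0`, `X_{00} f = s·f − Σ_l w_l·∂f/∂w_l`, and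
`X_{i0} f = w_i·(s·f − Σ_l w_l·∂f/∂w_l)` for `i ≠ 0`. -/
noncomputable def Xop (F : Type*) [CommRing F] {m : ℕ} (s : ℤ) (i j : Fin (m + 1))
    (f : MvPolynomial (Fin m) F) : MvPolynomial (Fin m) F :=
  if h : j = 0 then Wvar F i * EulerOp F s f
  else Wvar F i * MvPolynomial.pderiv (j.pred h) f

section Aux

open MvPolynomial

variable {F : Type*} [CommRing F] {m : ℕ}

/-- Iterated partial derivative along a list of variables. -/
noncomputable def DL (L : List (Fin m)) (g : MvPolynomial (Fin m) F) : MvPolynomial (Fin m) F :=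
  L.foldr (fun i h => MvPolynomial.pderiv i h) g

@[simp] lemma DL_nil (g : MvPolynomial (Fin m) F) : DL ([] : List (Fin m)) g = g := rfl

@[simp] lemma DL_cons (i : Fin m) (L : List (Fin m)) (g : MvPolynomial (Fin m) F) :
    DL (i :: L) g = MvPolynomial.pderiv i (DL L g) := rfl

lemma DL_append (L₁ L₂ : List (Fin m)) (g : MvPolynomial (Fin m) F) :
    DL (L₁ ++ L₂) g = DL L₁ (DL L₂ g) := by
  simp [DL, List.foldr_append]

lemma DL_sum {ι : Type*} (s : Finset ι) (g : ι → MvPolynomial (Fin m) F) (L : List (Fin m)) :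
    DL L (∑ x ∈ s, g x) = ∑ x ∈ s, DL L (g x) := by
  induction L with
  | nil => simp
  | cons i L ih => simp [DL_cons, ih, map_sum]

lemma DL_replicate (a : Fin m) (b : ℕ) (α : Fin m →₀ ℕ) (c : F) :
    DL (List.replicate b a) (monomial α c)
      = monomial (α - Finsupp.single a b) (c * ((α a).descFactorial b : ℕ)) := by
  induction b with
  | zero => simp
  | succ b ih =>
    rw [List.replicate_succ, DL_cons, ih, pderiv_monomial]
    have he : α - Finsupp.single a b - Finsupp.single a 1 = α - Finsupp.single a (b + 1) := by
      rw [tsub_tsub, ← Finsupp.single_add]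
    have ha : (α - Finsupp.single a b) a = α a - b := by
      rw [Finsupp.tsub_apply, Finsupp.single_eq_same]
    rw [he, ha, Nat.descFactorial_succ, Nat.cast_mul]
    ring_nf

/-- Key computation: for any multi-exponent `γ` there is a list `L` of variables such that
iterated differentiation along `L` sends `monomial α c` to
`monomial (α - γ) (c * N)` for a natural number `N` which is nonzero iff `γ ≤ α`. -/
lemma exists_DL (γ : Fin m →₀ ℕ) :
    ∃ L : List (Fin m), ∀ (α : Fin m →₀ ℕ) (c : F), ∃ N : ℕ,
      DL L (monomial α c) = monomial (α - γ) (c * (N : F)) ∧ (γ ≤ α ↔ N ≠ 0) := by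
  induction γ using Finsupp.induction with
  | zero =>
    refine ⟨[], fun α c => ⟨1, ?_, by simp⟩⟩
    simp
  | single_add a b f0 haf hb ih =>
    obtain ⟨L, hL⟩ := ih
    refine ⟨List.replicate b a ++ L, fun α c => ?_⟩
    obtain ⟨N, hEq, hIff⟩ := hL α c
    have hf0a : f0 a = 0 := Finsupp.notMem_support_iff.mp haf
    refine ⟨N * (α a).descFactorial b, ?_, ?_⟩
    · rw [DL_append, hEq, DL_replicate]
      have h1 : (α - f0) a = α a := by
        rw [Finsupp.tsub_apply, hf0a, Nat.sub_zero]
      have h2 : α - f0 - Finsupp.single a b = α - (Finsupp.single a b + f0) := by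
        rw [tsub_tsub, add_comm]
      rw [h1, h2, Nat.cast_mul]
      ring_nf
    · constructor
      · intro h hN
        rcases Nat.mul_eq_zero.mp hN with hN | hN
        · have hle : f0 ≤ α := by
            intro j
            calc f0 j ≤ (Finsupp.single a b) j + f0 j := Nat.le_add_left _ _
              _ = (Finsupp.single a b + f0) j := (Finsupp.add_apply _ _ _).symm
              _ ≤ α j := h j
          exact (hIff.mp hle) hN
        · have hba : b ≤ α a := by
            calc b = (Finsupp.single a b) a + f0 a := by
                  rw [Finsupp.single_eq_same, hf0a, Nat.add_zero]
              _ = (Finsupp.single a b + f0) a := (Finsupp.add_apply _ _ _).symm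
              _ ≤ α a := h a
          exact absurd hN (by simpa [Nat.descFactorial_eq_zero_iff_lt, Nat.not_lt] using hba)
      · intro hN
        have hN1 : N ≠ 0 := fun h => hN (by rw [h, Nat.zero_mul])
        have hN2 : (α a).descFactorial b ≠ 0 := fun h => hN (by rw [h, Nat.mul_zero])
        have hle : f0 ≤ α := hIff.mpr hN1
        have hba : b ≤ α a := by
          by_contra hc
          exact hN2 (Nat.descFactorial_eq_zero_iff_lt.mpr (Nat.lt_of_not_le hc))
        intro j
        rw [Finsupp.add_apply]
        rcases eq_or_ne a j with rfl | hja
        · rw [Finsupp.single_eq_same, hf0a]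
          omega
        · rw [Finsupp.single_eq_of_ne hja.symm, Nat.zero_add]
          exact hle j

lemma euler_mon (α : Fin m →₀ ℕ) (c : F) :
    ∑ l : Fin m, MvPolynomial.X l * MvPolynomial.pderiv l (monomial α c)
      = ((Finsupp.degree α : ℕ) : F) • monomial α c := by
  have hterm : ∀ l : Fin m, (MvPolynomial.X l : MvPolynomial (Fin m) F)
      * MvPolynomial.pderiv l (monomial α c) = ((α l : ℕ) : F) • monomial α c := by
    intro l
    rw [pderiv_monomial, X, monomial_mul, smul_monomial]
    rcases Nat.eq_zero_or_pos (α l) with h | h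
    · simp [h]
    · have hexp : Finsupp.single l 1 + (α - Finsupp.single l 1) = α := by
        ext j
        simp only [Finsupp.add_apply, Finsupp.tsub_apply, Finsupp.single_apply]
        split_ifs with hij
        · subst hij; omega
        · omega
      rw [hexp]
      congr 1
      rw [smul_eq_mul]
      ring
  rw [Finset.sum_congr rfl fun l _ => hterm l, ← Finset.sum_smul]
  congr 1
  rw [← Nat.cast_sum]
  congr 1
  rw [Finsupp.degree]
  exact (Finset.sum_subset (Finset.subset_univ _)
    (fun x _ hx => Finsupp.notMem_support_iff.mp hx)).symm

lemma euler_homogeneous (g : MvPolynomial (Fin m) F) (e : ℕ) (hg : g.IsHomogeneous e) :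
    ∑ l : Fin m, MvPolynomial.X l * MvPolynomial.pderiv l g = ((e : ℕ) : F) • g := by
  have hdeg : ∀ α ∈ g.support, Finsupp.degree α = e := by
    intro α hα
    by_contra h
    exact (mem_support_iff.mp hα) (hg.coeff_eq_zero h)
  calc ∑ l : Fin m, MvPolynomial.X l * MvPolynomial.pderiv l g
      = ∑ l : Fin m, ∑ α ∈ g.support,
          MvPolynomial.X l * MvPolynomial.pderiv l (monomial α (coeff α g)) := by
        refine Finset.sum_congr rfl fun l _ => ?_
        conv_lhs => rw [g.as_sum]
        rw [map_sum, Finset.mul_sum]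
    _ = ∑ α ∈ g.support, ∑ l : Fin m,
          MvPolynomial.X l * MvPolynomial.pderiv l (monomial α (coeff α g)) := Finset.sum_comm
    _ = ∑ α ∈ g.support, ((e : ℕ) : F) • monomial α (coeff α g) := by
        refine Finset.sum_congr rfl fun α hα => ?_
        rw [euler_mon, hdeg α hα]
    _ = ((e : ℕ) : F) • g := by rw [← Finset.smul_sum, ← g.as_sum]

end Aux

open MvPolynomial in
/-- Let `f ∈ F[w₁,…,w_{h−1}]` (here `h = m + 1 ≥ 2`) be a nonzero
homogeneous polynomial of total degree `d > s`.  Then the smallest `F`-subspace of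
`F[w₁,…,w_{h−1}]` containing `f` and stable under all the operators `X_{ij}` is the
whole polynomial ring: every such subspace is `⊤`. -/
theorem span_of_homogeneous_under_Xop_eq_top
    {F : Type*} [Field F] [CharZero F] {m : ℕ} (hm : 1 ≤ m) (s : ℤ)
    (f : MvPolynomial (Fin m) F) (hf : f ≠ 0) {d : ℕ}
    (hhom : MvPolynomial.IsHomogeneous f d) (hds : s < (d : ℤ))
    (p : Submodule F (MvPolynomial (Fin m) F)) (hfp : f ∈ p)
    (hstab : ∀ (i j : Fin (m + 1)), ∀ g ∈ p, Xop F s i j g ∈ p) :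
    p = ⊤ := by
  classical
  -- `p` is closed under partial derivatives
  have hD : ∀ (l : Fin m), ∀ g ∈ p, MvPolynomial.pderiv l g ∈ p := by
    intro l g hg
    have h := hstab 0 (Fin.succ l) g hg
    rwa [Xop, dif_neg (Fin.succ_ne_zero l), Wvar, dif_pos rfl, Fin.pred_succ, one_mul] at h
  have hDL : ∀ (L : List (Fin m)), ∀ g ∈ p, DL L g ∈ p := by
    intro L
    induction L with
    | nil => intro g hg; simpa using hg
    | cons i L ih => intro g hg; exact hD i _ (ih g hg)
  -- `p` is closed under multiplication by `X l` on homogeneous elements of degree `> s`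
  have hMul : ∀ (l : Fin m) (g : MvPolynomial (Fin m) F) (e : ℕ),
      g.IsHomogeneous e → s < (e : ℤ) → g ∈ p → MvPolynomial.X l * g ∈ p := by
    intro l g e hg hse hgp
    have ht : ((s : F) - ((e : ℕ) : F)) ≠ 0 := by
      refine sub_ne_zero.mpr ?_
      have h1 : ((s : ℤ) : F) ≠ (((e : ℕ) : ℤ) : F) :=
        fun h => (ne_of_lt hse) (Int.cast_injective h)
      push_cast at h1
      exact h1
    have hE : EulerOp F s g = ((s : F) - ((e : ℕ) : F)) • g := by
      rw [EulerOp, euler_homogeneous g e hg, ← Int.cast_smul_eq_zsmul F s g, ← sub_smul]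
    have hX : Xop F s (Fin.succ l) 0 g
        = ((s : F) - ((e : ℕ) : F)) • (MvPolynomial.X l * g) := by
      rw [Xop, dif_pos rfl, Wvar, dif_neg (Fin.succ_ne_zero l), Fin.pred_succ, hE, mul_smul_comm]
    have hmem := hstab (Fin.succ l) 0 g hgp
    rw [hX] at hmem
    have h2 := p.smul_mem ((s : F) - ((e : ℕ) : F))⁻¹ hmem
    rwa [smul_smul, inv_mul_cancel₀ ht, one_smul] at h2
  -- `monomial β 1 = c • ...` helper
  have hmono : ∀ (b : Fin m →₀ ℕ) (c : F), monomial b c = c • monomial b (1 : F) := by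
    intro b c
    rw [smul_monomial, smul_eq_mul, mul_one]
  -- `p` contains `monomial β 1 * f` for every `β`
  have hMonF : ∀ (n : ℕ) (β : Fin m →₀ ℕ), (∑ l : Fin m, β l) ≤ n →
      monomial β (1 : F) * f ∈ p := by
    intro n
    induction n with
    | zero =>
      intro β hβ
      have hβ0 : β = 0 := by
        ext j
        have := Finset.sum_eq_zero_iff.mp (Nat.le_zero.mp hβ) j (Finset.mem_univ j)
        simpa using this
      rw [hβ0]
      simpa using hfp
    | succ n ih =>
      intro β hβ
      by_cases hβ0 : β = 0
      · rw [hβ0]; simpa using hfp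
      · obtain ⟨i, hi⟩ : ∃ i, β i ≠ 0 := by
          by_contra hc
          push_neg at hc
          exact hβ0 (by ext j; simpa using hc j)
        set β' : Fin m →₀ ℕ := β - Finsupp.single i 1 with hβ'
        have hdec : β = Finsupp.single i 1 + β' := by
          ext j
          simp only [Finsupp.add_apply, hβ', Finsupp.tsub_apply, Finsupp.single_apply]
          split_ifs with hij
          · subst hij; omega
          · omega
        have hsum : (∑ l : Fin m, β' l) ≤ n := by
          have h1 : (∑ l : Fin m, β l)
              = (∑ l : Fin m, (Finsupp.single i 1 : Fin m →₀ ℕ) l) + ∑ l : Fin m, β' l := by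
            rw [← Finset.sum_add_distrib]
            refine Finset.sum_congr rfl fun l _ => ?_
            conv_lhs => rw [hdec]
            rw [Finsupp.add_apply]
          have h2 : (∑ l : Fin m, (Finsupp.single i 1 : Fin m →₀ ℕ) l) = 1 := by
            simp [Finsupp.single_apply]
          omega
        have hmem' : monomial β' (1 : F) * f ∈ p := ih β' hsum
        have hhom' : (monomial β' (1 : F) * f).IsHomogeneous (Finsupp.degree β' + d) :=
          (isHomogeneous_monomial (1 : F) rfl).mul hhom
        have hse' : s < ((Finsupp.degree β' + d : ℕ) : ℤ) := by
          have : ((d : ℕ) : ℤ) ≤ ((Finsupp.degree β' + d : ℕ) : ℤ) := by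
            push_cast; omega
          omega
        have hXmem := hMul i _ _ hhom' hse' hmem'
        have heq : monomial β (1 : F) * f
            = MvPolynomial.X i * (monomial β' (1 : F) * f) := by
          rw [← mul_assoc, X, monomial_mul, one_mul, ← hdec]
        rwa [heq]
  -- the lex-maximal exponent of `f`
  have hsupp : f.support.Nonempty := support_nonempty.mpr hf
  obtain ⟨γ, hγsupp, hmax⟩ :=
    f.support.exists_max_image (toLex : (Fin m →₀ ℕ) → Lex (Fin m →₀ ℕ)) hsupp
  have hγmax : ∀ δ ∈ f.support, δ ≠ γ → toLex δ < toLex γ := by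
    intro δ hδ hne
    refine lt_of_le_of_ne (hmax δ hδ) ?_
    intro h
    exact hne (congrArg ofLex h)
  obtain ⟨L, hL⟩ := exists_DL (F := F) γ
  -- key: all monomials are in `p`
  haveI : WellFoundedLT (Lex (Fin m →₀ ℕ)) := Finsupp.Lex.wellFoundedLT_of_finite
  have key : ∀ β : Lex (Fin m →₀ ℕ), monomial (ofLex β) (1 : F) ∈ p := by
    refine fun β => WellFounded.induction (C := fun β => monomial (ofLex β) (1 : F) ∈ p)
      (wellFounded_lt (α := Lex (Fin m →₀ ℕ))) β ?_
    intro β IH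
    set b : Fin m →₀ ℕ := ofLex β with hb
    have hbsum : monomial b (1 : F) * f = ∑ δ ∈ f.support, monomial (b + δ) (coeff δ f) := by
      conv_lhs => rw [f.as_sum]
      rw [Finset.mul_sum]
      exact Finset.sum_congr rfl fun δ _ => by rw [monomial_mul, one_mul]
    have hS : DL L (monomial b (1 : F) * f) ∈ p := by
      refine hDL L _ ?_
      exact hMonF (∑ l : Fin m, b l) b le_rfl
    rw [hbsum, DL_sum] at hS
    -- each term for `δ ≠ γ` lies in `p`
    have hterm : ∀ δ ∈ f.support.erase γ, DL L (monomial (b + δ) (coeff δ f)) ∈ p := by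
      intro δ hδe
      have hδ : δ ∈ f.support := Finset.mem_of_mem_erase hδe
      have hδne : δ ≠ γ := Finset.ne_of_mem_erase hδe
      obtain ⟨N, hEq, hIff⟩ := hL (b + δ) (coeff δ f)
      rw [hEq]
      by_cases hN : N = 0
      · rw [hN]
        simp
      · have hle : γ ≤ b + δ := hIff.mpr hN
        have hlt : toLex (b + δ - γ) < β := by
          have hadd : ∀ x y : Fin m →₀ ℕ, toLex (x + y) = toLex x + toLex y := fun _ _ => rfl
          have h1 : toLex δ < toLex γ := hγmax δ hδ hδne
          have h2 : toLex (b + δ - γ) + toLex γ < toLex b + toLex γ := by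
            rw [← hadd, ← hadd, tsub_add_cancel_of_le hle]
            exact add_lt_add_right h1 (toLex b)
          have h3 := lt_of_add_lt_add_right h2
          rwa [hb]
        have hIHδ := IH _ hlt
        rw [hmono]
        exact p.smul_mem _ hIHδ
    have hγterm : DL L (monomial (b + γ) (coeff γ f)) ∈ p := by
      have hsplit := Finset.add_sum_erase f.support
        (fun δ => DL L (monomial (b + δ) (coeff δ f))) hγsupp
      have : DL L (monomial (b + γ) (coeff γ f))
          = (∑ δ ∈ f.support, DL L (monomial (b + δ) (coeff δ f)))
            - ∑ δ ∈ f.support.erase γ, DL L (monomial (b + δ) (coeff δ f)) := by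
        rw [← hsplit]; ring
      rw [this]
      exact Submodule.sub_mem p hS (Submodule.sum_mem p hterm)
    obtain ⟨N, hEq, hIff⟩ := hL (b + γ) (coeff γ f)
    rw [hEq, add_tsub_cancel_right] at hγterm
    have hN : N ≠ 0 := hIff.mp (le_add_self)
    have hcN : coeff γ f * (N : F) ≠ 0 :=
      mul_ne_zero (mem_support_iff.mp hγsupp) (Nat.cast_ne_zero.mpr hN)
    have : monomial b (1 : F) = (coeff γ f * (N : F))⁻¹ • monomial b (coeff γ f * (N : F)) := by
      rw [smul_monomial, smul_eq_mul, inv_mul_cancel₀ hcN]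
    rw [this]
    exact p.smul_mem _ hγterm
  -- conclude
  refine eq_top_iff.mpr ?_
  intro g _
  rw [g.as_sum]
  refine Submodule.sum_mem p fun α _ => ?_
  rw [hmono]
  exact p.smul_mem _ (key (toLex α))
end

section
/- Assume s ≥ 0 and let V_s ⊆ F[w_1,…,w_{h−1}] be the F-subspace of polynomials of total degree at most s. Then V_s is stable under all the operators X_{ij} (0 ≤ i, j ≤ h−1), and every nonzero F-subspace of V_s that is stable under all the X_{ij} equals V_s. -/
open MvPolynomial in
lemma XopAux.sum_fin {m : ℕ} (d : Fin m →₀ ℕ) :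
    (d.sum fun _ e => e) = ∑ l : Fin m, d l :=
  Finsupp.sum_fintype _ _ fun _ => rfl

open MvPolynomial in
lemma XopAux.sub_single_add {m : ℕ} (d : Fin m →₀ ℕ) (j : Fin m) (h : d j ≠ 0) :
    d - Finsupp.single j 1 + Finsupp.single j 1 = d :=
  tsub_add_cancel_of_le (Finsupp.single_le_iff.2 (Nat.one_le_iff_ne_zero.2 h))

open MvPolynomial in
lemma XopAux.sum_sub_single {m : ℕ} (d : Fin m →₀ ℕ) (j : Fin m) (h : d j ≠ 0) :
    ((d - Finsupp.single j 1).sum fun _ e => e) + 1 = d.sum fun _ e => e := by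
  conv_rhs => rw [← XopAux.sub_single_add d j h]
  rw [Finsupp.sum_add_index' (fun _ => rfl) (fun _ _ _ => rfl),
    Finsupp.sum_single_index rfl]

open MvPolynomial in
lemma XopAux.X_mul_pderiv_monomial {F : Type*} [CommRing F] {m : ℕ} (l : Fin m)
    (d : Fin m →₀ ℕ) (c : F) :
    X l * pderiv l (monomial d c) = (d l) • monomial d c := by
  rw [pderiv_monomial]
  rcases eq_or_ne (d l) 0 with h | h
  · simp [h]
  · rw [X, monomial_mul, smul_monomial, add_comm, XopAux.sub_single_add d l h,
      one_mul, nsmul_eq_mul, mul_comm]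

open MvPolynomial in
lemma XopAux.eulerOp_monomial {F : Type*} [CommRing F] {m : ℕ} (s : ℤ)
    (d : Fin m →₀ ℕ) (c : F) :
    EulerOp F s (monomial d c)
      = (s - ((d.sum fun _ e => e : ℕ) : ℤ)) • monomial d c := by
  unfold EulerOp
  rw [Finset.sum_congr rfl fun l _ => XopAux.X_mul_pderiv_monomial l d c,
    ← Finset.sum_smul, sub_smul, ← XopAux.sum_fin d, natCast_zsmul]

open MvPolynomial in
/-- `EulerOp` as a linear map. -/
noncomputable def XopAux.eulerLM (F : Type*) [CommRing F] (m : ℕ) (s : ℤ) :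
    MvPolynomial (Fin m) F →ₗ[F] MvPolynomial (Fin m) F where
  toFun := EulerOp F s
  map_add' a b := by
    simp only [EulerOp, map_add, mul_add, smul_add, Finset.sum_add_distrib]
    abel
  map_smul' c a := by
    simp only [EulerOp, map_smul, RingHom.id_apply, smul_sub, Finset.smul_sum,
      Derivation.map_smul, mul_smul_comm, smul_comm s c]

open MvPolynomial in
lemma XopAux.totalDegree_monomial_le' {F : Type*} [CommRing F] {m : ℕ}
    (d : Fin m →₀ ℕ) (c : F) :
    (monomial d c).totalDegree ≤ d.sum fun _ e => e := by
  simpa only [Function.id_def] using totalDegree_monomial_le d c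

open MvPolynomial in
lemma XopAux.totalDegree_Wvar {F : Type*} [CommRing F] [Nontrivial F] {m : ℕ}
    (i : Fin (m + 1)) : (Wvar F i).totalDegree ≤ 1 := by
  unfold Wvar
  split
  · simp [totalDegree_one]
  · simp [totalDegree_X]

open MvPolynomial in
lemma XopAux.coeff_pderiv {F : Type*} [CommRing F] {m : ℕ} (j : Fin m)
    (f : MvPolynomial (Fin m) F) (d : Fin m →₀ ℕ) (hdj : d j ≠ 0) :
    coeff (d - Finsupp.single j 1) (pderiv j f) = coeff d f * (d j : F) := by
  conv_lhs => rw [f.as_sum, map_sum,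
    Finset.sum_congr rfl fun e _ => (pderiv_monomial :
      pderiv j (monomial e (coeff e f)) = _)]
  rw [coeff_sum]
  simp only [coeff_monomial]
  rw [Finset.sum_eq_single d]
  · rw [if_pos rfl]
  · intro e _ hne
    by_cases h0 : e j = 0
    · simp [h0]
    · rw [if_neg]
      intro heq
      apply hne
      rw [← XopAux.sub_single_add e j h0, heq, XopAux.sub_single_add d j hdj]
  · intro hd
    rw [notMem_support_iff.1 hd, zero_mul, if_pos rfl]

open MvPolynomial in
lemma XopAux.totalDegree_pderiv_le {F : Type*} [CommRing F] {m : ℕ} (j : Fin m)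
    (f : MvPolynomial (Fin m) F) {n : ℕ} (hf : f.totalDegree ≤ n + 1) :
    (pderiv j f).totalDegree ≤ n := by
  conv_lhs => rw [f.as_sum, map_sum]
  apply totalDegree_finsetSum_le
  intro d hd
  rw [pderiv_monomial]
  rcases eq_or_ne (d j) 0 with h | h
  · simp [h]
  · refine le_trans (XopAux.totalDegree_monomial_le' _ _) ?_
    have h1 := XopAux.sum_sub_single d j h
    have h2 : (d.sum fun _ e => e) ≤ n + 1 := le_trans (le_totalDegree hd) hf
    omega

/-- For `s ≥ 0`, the subspace `V_s` of polynomials of total degree at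
most `s` is stable under all the operators `X_{ij}`, and every nonzero subspace of
`V_s` stable under all the `X_{ij}` equals `V_s`. -/
theorem restrictTotalDegree_Xop_stable_and_irreducible
    {F : Type*} [Field F] [CharZero F] {m : ℕ} (hm : 1 ≤ m) (s : ℕ) :
    (∀ (i j : Fin (m + 1)), ∀ f ∈ MvPolynomial.restrictTotalDegree (Fin m) F s,
        Xop F (s : ℤ) i j f ∈ MvPolynomial.restrictTotalDegree (Fin m) F s) ∧
    (∀ p : Submodule F (MvPolynomial (Fin m) F),
        p ≠ ⊥ → p ≤ MvPolynomial.restrictTotalDegree (Fin m) F s →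
        (∀ (i j : Fin (m + 1)), ∀ f ∈ p, Xop F (s : ℤ) i j f ∈ p) →
        p = MvPolynomial.restrictTotalDegree (Fin m) F s) := by
  open MvPolynomial XopAux in
  constructor
  · -- Stability
    intro i j f hf
    have hfs : f.totalDegree ≤ s := (mem_restrictTotalDegree _ _ _).1 hf
    unfold Xop
    split_ifs with hj
    · -- j = 0 : Euler operator case
      have hE : EulerOp F (s : ℤ) f
          = ∑ d ∈ f.support,
              (((s : ℤ) - ((d.sum fun _ e => e : ℕ) : ℤ)) • monomial d (coeff d f)) := by
        conv_lhs => rw [f.as_sum,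
          show EulerOp F (s : ℤ) = eulerLM F m (s : ℤ) from rfl, map_sum]
        exact Finset.sum_congr rfl fun d _ => eulerOp_monomial _ d _
      rw [hE, Finset.mul_sum]
      refine Submodule.sum_mem _ fun d hd => ?_
      have hds : (d.sum fun _ e => e) ≤ s := le_trans (le_totalDegree hd) hfs
      rcases eq_or_lt_of_le hds with h | h
      · rw [h]
        simp
      · rw [mem_restrictTotalDegree, mul_smul_comm]
        refine le_trans (totalDegree_smul_le _ _) (le_trans (totalDegree_mul _ _) ?_)
        have h1 := totalDegree_Wvar (F := F) i
        have h2 := XopAux.totalDegree_monomial_le' d (coeff d f)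
        omega
    · -- j ≠ 0 : derivative case
      set l := j.pred hj with hl
      have hD : pderiv l f
          = ∑ d ∈ f.support, monomial (d - Finsupp.single l 1) (coeff d f * (d l : F)) := by
        conv_lhs => rw [f.as_sum, map_sum]
        exact Finset.sum_congr rfl fun d _ => pderiv_monomial
      rw [hD, Finset.mul_sum]
      refine Submodule.sum_mem _ fun d hd => ?_
      rcases eq_or_ne (d l) 0 with h | h
      · simp [h]
      · rw [mem_restrictTotalDegree]
        refine le_trans (totalDegree_mul _ _) ?_
        have h1 := totalDegree_Wvar (F := F) i
        have h2 := XopAux.totalDegree_monomial_le' (d - Finsupp.single l 1) (coeff d f * (d l : F))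
        have h3 := sum_sub_single d l h
        have h4 : (d.sum fun _ e => e) ≤ s := le_trans (le_totalDegree hd) hfs
        omega
  · -- Irreducibility
    intro p hne hle hstab
    -- p is stable under partial derivatives
    have hpd : ∀ (j : Fin m), ∀ f ∈ p, pderiv j f ∈ p := by
      intro j f hf
      have := hstab 0 j.succ f hf
      unfold Xop Wvar at this
      rw [dif_neg (Fin.succ_ne_zero j), dif_pos rfl, Fin.pred_succ, one_mul] at this
      exact this
    -- every nonzero exponent vector has a nonzero coordinate
    have hexj : ∀ d : Fin m →₀ ℕ, (d.sum fun _ e => e) ≠ 0 → ∃ j, d j ≠ 0 := by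
      intro d hd
      by_contra hcon
      push_neg at hcon
      apply hd
      have : d = 0 := Finsupp.ext fun a => hcon a
      rw [this, Finsupp.sum_zero_index]
    -- Step 1 : 1 ∈ p
    have hone : (1 : MvPolynomial (Fin m) F) ∈ p := by
      obtain ⟨f0, hf0p, hf0⟩ := Submodule.exists_mem_ne_zero_of_ne_bot hne
      have key : ∀ n : ℕ, ∀ f : MvPolynomial (Fin m) F,
          f ∈ p → f ≠ 0 → f.totalDegree ≤ n → (1 : MvPolynomial (Fin m) F) ∈ p := by
        intro n
        induction n with
        | zero =>
          intro f hp h0 hd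
          have htd : f.totalDegree = 0 := Nat.le_zero.1 hd
          have hsupp := (totalDegree_eq_zero_iff (Fin m) f).1 htd
          have hC : f = MvPolynomial.C (coeff 0 f) := by
            apply MvPolynomial.ext
            intro d
            rcases eq_or_ne d 0 with rfl | hdne
            · simp
            · rw [coeff_C, if_neg (Ne.symm hdne)]
              by_contra hc
              exact hdne (Finsupp.ext fun a => hsupp d (mem_support_iff.2 hc) a)
          have hc0 : coeff 0 f ≠ 0 := fun hc => h0 (by rw [hC, hc, map_zero])
          set c := coeff 0 f with hc
          have : c⁻¹ • f = 1 := by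
            rw [hC, smul_eq_C_mul, ← map_mul, inv_mul_cancel₀ hc0, map_one]
          rw [← this]
          exact p.smul_mem _ hp
        | succ n ih =>
          intro f hp h0 hd
          by_cases h : f.totalDegree ≤ n
          · exact ih f hp h0 h
          · obtain ⟨d, hdsupp, hdsum⟩ := Finset.exists_mem_eq_sup f.support
              (Finset.nonempty_iff_ne_empty.2 (mt support_eq_empty.1 h0)) (fun e => e.sum fun _ k => k)
            have hdsum' : (d.sum fun _ e => e) = f.totalDegree := hdsum.symm
            have hdne : (d.sum fun _ e => e) ≠ 0 := by
              rw [hdsum']; omega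
            obtain ⟨j, hj⟩ := hexj d hdne
            have hgp : pderiv j f ∈ p := hpd j f hp
            have hgne : pderiv j f ≠ 0 := by
              intro hzero
              have hc := XopAux.coeff_pderiv j f d hj
              rw [hzero, coeff_zero] at hc
              have hcd : coeff d f ≠ 0 := mem_support_iff.1 hdsupp
              have hdj : ((d j : F)) ≠ 0 := Nat.cast_ne_zero.2 hj
              exact hdj (by
                have := hc.symm
                rcases mul_eq_zero.1 this with h' | h'
                · exact absurd h' hcd
                · exact h')
            exact ih _ hgp hgne (XopAux.totalDegree_pderiv_le j f hd)
      exact key f0.totalDegree f0 hf0p hf0 le_rfl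
    -- Step 2 : all monomials of degree ≤ s are in p
    have hmono : ∀ n : ℕ, ∀ d : Fin m →₀ ℕ, (d.sum fun _ e => e) ≤ n →
        (d.sum fun _ e => e) ≤ s → monomial d (1 : F) ∈ p := by
      intro n
      induction n with
      | zero =>
        intro d h1 _
        have hd0 : d = 0 := by
          apply Finsupp.ext
          intro a
          by_contra hc
          have := XopAux.sum_sub_single d a hc
          omega
        rw [hd0]
        rw [show (monomial (0 : Fin m →₀ ℕ)) (1 : F) = 1 by
          rw [monomial_zero', map_one]]
        exact hone
      | succ n ih =>
        intro d h1 h2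
        by_cases h : (d.sum fun _ e => e) ≤ n
        · exact ih d h h2
        · have hsum : (d.sum fun _ e => e) = n + 1 := by omega
          obtain ⟨j, hj⟩ := hexj d (by omega)
          set e := d - Finsupp.single j 1 with he
          have hes : (e.sum fun _ k => k) = n := by
            rw [he]
            have := XopAux.sum_sub_single d j hj
            omega
          have hep : monomial e (1 : F) ∈ p := ih e (by omega) (by omega)
          have hx := hstab j.succ 0 _ hep
          unfold Xop Wvar at hx
          rw [dif_pos rfl, dif_neg (Fin.succ_ne_zero j), Fin.pred_succ,
            XopAux.eulerOp_monomial, hes, mul_smul_comm, X, monomial_mul, one_mul,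
            add_comm, XopAux.sub_single_add d j hj] at hx
          have hcast : ((s : ℤ) - (n : ℤ)) • monomial d (1 : F)
              = (((s : ℤ) - (n : ℤ) : ℤ) : F) • monomial d (1 : F) :=
            (Int.cast_smul_eq_zsmul F _ _).symm
          rw [hcast] at hx
          have hcne : (((s : ℤ) - (n : ℤ) : ℤ) : F) ≠ 0 := by
            rw [Int.cast_ne_zero]
            omega
          have := p.smul_mem (((s : ℤ) - (n : ℤ) : ℤ) : F)⁻¹ hx
          rwa [smul_smul, inv_mul_cancel₀ hcne, one_smul] at this
    -- Conclusion
    refine le_antisymm hle ?_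
    intro f hf
    have hfs : f.totalDegree ≤ s := (mem_restrictTotalDegree _ _ _).1 hf
    rw [f.as_sum]
    refine Submodule.sum_mem _ fun d hd => ?_
    have hds : (d.sum fun _ e => e) ≤ s := le_trans (le_totalDegree hd) hfs
    have : monomial d (coeff d f) = coeff d f • monomial d (1 : F) := by
      rw [smul_monomial, smul_eq_mul, mul_one]
    rw [this]
    exact p.smul_mem _ (hmono _ d le_rfl hds)
end

section
/- Fix an integer s and a natural number d, and assume c_α = 0 whenever |α| < d. Define f_0 := f and, for n ≥ 1, f_n := (1/n)·((d+n−s)·f_{n−1} + Θ(f_{n−1})), where Θ is the coefficientwise operator determined by coeff_α(Θg) = (s−|α|)·coeff_α(g). Then for every n ≥ 0: coeff_α(f_n) = c_α if |α| = d, and coeff_α(f_n) = (−1)^n·C(|α|−d−1, n)·c_α if |α| > d (where C(·,·) is the binomial coefficient, equal to 0 when |α|−d−1 < n). Consequently sup_α |coeff_α(f_n − f^{(d)})|·w(α) → 0 as n → ∞, where f^{(d)} := Σ_{|α|=d} c_α w^α is the lowest-degree homogeneous component of f. -/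
/-- Let `L` be a field of characteristic zero with a nonarchimedean
absolute value `v`.  Fix `m ≥ 1`, weights `r i > 0` and write `w(α) = Π r i ^ α i`,
`|α| = Σ α i`.  Let `c` be the coefficient family of a series satisfying the decay
condition, with `c α = 0` for `|α| < d`.  Define `f 0 = c` and
`f (n+1) = (1/(n+1))·((d+(n+1)−s)·f n + Θ (f n))` where `(Θ g) α = (s−|α|)·g α`.  Then
`f n α = c α` for `|α| = d`, `f n α = (−1)^n·C(|α|−d−1, n)·c α` for `|α| > d`, and
`sup_α v (f n α − f^{(d)} α)·w(α) → 0` where `f^{(d)}` is the lowest-degree homogeneous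
component of `f`. -/
theorem recursion_converges_to_lowest_homogeneous_part
    {L : Type*} [Field L] [CharZero L] (v : AbsoluteValue L ℝ)
    (hna : ∀ a b : L, v (a + b) ≤ max (v a) (v b))
    (hint : ∀ k : ℤ, v ((k : ℤ) : L) ≤ 1)
    {m : ℕ} (hm : 1 ≤ m) (r : Fin m → ℝ) (hr : ∀ i, 0 < r i)
    (c : (Fin m →₀ ℕ) → L)
    (hdecay : ∀ ε : ℝ, 0 < ε →
      {α : Fin m →₀ ℕ | ε ≤ v (c α) * ∏ i, r i ^ (α i)}.Finite)
    (s : ℤ) (d : ℕ)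
    (hc : ∀ α : Fin m →₀ ℕ, (α.sum fun _ k => k) < d → c α = 0)
    (f : ℕ → (Fin m →₀ ℕ) → L)
    (hf0 : f 0 = c)
    (hfrec : ∀ (n : ℕ) (α : Fin m →₀ ℕ),
      f (n + 1) α = ((n : L) + 1)⁻¹ *
        (((((d : ℤ) + (n + 1) - s) : ℤ) : L) * f n α +
          (((s - ((α.sum fun _ k => k : ℕ) : ℤ)) : ℤ) : L) * f n α)) :
    (∀ (n : ℕ) (α : Fin m →₀ ℕ), (α.sum fun _ k => k) = d → f n α = c α) ∧
    (∀ (n : ℕ) (α : Fin m →₀ ℕ), d < (α.sum fun _ k => k) →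
      f n α = ((-1 : L) ^ n * ((Nat.choose ((α.sum fun _ k => k) - d - 1) n : ℕ) : L)) * c α) ∧
    Filter.Tendsto
      (fun n : ℕ => ⨆ α : Fin m →₀ ℕ,
        v (f n α - (if (α.sum fun _ k => k) = d then c α else 0)) * ∏ i, r i ^ (α i))
      Filter.atTop (nhds 0) := by
  classical
  -- key pointwise formula for the coefficients of `f n`
  have key : ∀ (n : ℕ) (α : Fin m →₀ ℕ),
      ((α.sum fun _ k => k) < d → f n α = 0) ∧
      ((α.sum fun _ k => k) = d → f n α = c α) ∧
      (d < (α.sum fun _ k => k) →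
        f n α = ((-1 : L) ^ n *
          ((Nat.choose ((α.sum fun _ k => k) - d - 1) n : ℕ) : L)) * c α) := by
    intro n
    induction n with
    | zero =>
      intro α
      refine ⟨fun h => by rw [hf0]; exact hc α h, fun _ => by rw [hf0], fun h => ?_⟩
      rw [hf0]; simp
    | succ n ih =>
      intro α
      have hrec := hfrec n α
      have hn0 : ((n : L) + 1) ≠ 0 := Nat.cast_add_one_ne_zero n
      refine ⟨fun h => ?_, fun h => ?_, fun h => ?_⟩
      · rw [hrec, (ih α).1 h]; ring
      · rw [hrec, (ih α).2.1 h, h]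
        field_simp
        push_cast
        ring
      · rw [hrec, (ih α).2.2 h]
        set a := (α.sum fun _ k => k) with ha
        have hz : (((d : ℤ) + (↑n + 1) - s) + (s - (a : ℤ))) *
              ((-1 : ℤ) ^ n * (Nat.choose (a - d - 1) n : ℤ))
            = ((n : ℤ) + 1) * ((-1 : ℤ) ^ (n + 1) * (Nat.choose (a - d - 1) (n + 1) : ℤ)) := by
          rcases le_or_gt (n + 1) (a - d) with hle | hlt
          · have h2 := Nat.choose_succ_right_eq (a - d - 1) n
            have h3 := congrArg (Nat.cast (R := ℤ)) h2
            push_cast at h3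
            have h4 : ((a - d - 1 - n : ℕ) : ℤ) = (a : ℤ) - d - 1 - n := by omega
            rw [h4] at h3
            linear_combination ((-1 : ℤ) ^ n) * h3
          · have h5 : Nat.choose (a - d - 1) n = 0 := Nat.choose_eq_zero_of_lt (by omega)
            have h6 : Nat.choose (a - d - 1) (n + 1) = 0 := Nat.choose_eq_zero_of_lt (by omega)
            rw [h5, h6]; push_cast; ring
        have hzL := congrArg (fun z : ℤ => (z : L)) hz
        push_cast at hzL
        field_simp
        push_cast
        linear_combination hzL * c α
  refine ⟨fun n α h => (key n α).2.1 h, fun n α h => (key n α).2.2 h, ?_⟩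
  have hpos : ∀ α : Fin m →₀ ℕ, 0 < ∏ i, r i ^ (α i) :=
    fun α => Finset.prod_pos fun i _ => pow_pos (hr i) _
  set F : ℕ → (Fin m →₀ ℕ) → ℝ := fun n α =>
    v (f n α - (if (α.sum fun _ k => k) = d then c α else 0)) * ∏ i, r i ^ (α i) with hF
  have hFnonneg : ∀ n α, 0 ≤ F n α :=
    fun n α => mul_nonneg (v.nonneg _) (le_of_lt (hpos α))
  have hterm0 : ∀ n α, (α.sum fun _ k => k) ≤ n + d → F n α = 0 := by
    intro n α hle
    rcases lt_trichotomy (α.sum fun _ k => k) d with hlt | heq | hgt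
    · show v (f n α - _) * _ = 0
      rw [if_neg (by omega), (key n α).1 hlt]
      simp
    · show v (f n α - _) * _ = 0
      rw [if_pos heq, (key n α).2.1 heq]
      simp
    · have hch : Nat.choose ((α.sum fun _ k => k) - d - 1) n = 0 :=
        Nat.choose_eq_zero_of_lt (by omega)
      show v (f n α - _) * _ = 0
      rw [if_neg (by omega), (key n α).2.2 hgt, hch]
      simp
  have htermle : ∀ n α, n + d < (α.sum fun _ k => k) →
      F n α ≤ v (c α) * ∏ i, r i ^ (α i) := by
    intro n α hgt
    have hvle : v (f n α - 0) ≤ v (c α) := by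
      rw [sub_zero, (key n α).2.2 (by omega), v.map_mul]
      have hle1 : v ((-1 : L) ^ n *
          ((Nat.choose ((α.sum fun _ k => k) - d - 1) n : ℕ) : L)) ≤ 1 := by
        have hc2 : ((-1 : L) ^ n *
            ((Nat.choose ((α.sum fun _ k => k) - d - 1) n : ℕ) : L))
            = ((((-1) ^ n * (Nat.choose ((α.sum fun _ k => k) - d - 1) n : ℤ) : ℤ)) : L) := by
          push_cast; ring
        rw [hc2]; exact hint _
      calc v _ * v (c α) ≤ 1 * v (c α) :=
            mul_le_mul_of_nonneg_right hle1 (v.nonneg _)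
        _ = v (c α) := one_mul _
    show v (f n α - _) * _ ≤ _
    rw [if_neg (by omega : ¬ (α.sum fun _ k => k) = d)]
    exact mul_le_mul_of_nonneg_right hvle (le_of_lt (hpos α))
  show Filter.Tendsto (fun n : ℕ => ⨆ α : Fin m →₀ ℕ, F n α) Filter.atTop (nhds 0)
  rw [Metric.tendsto_atTop]
  intro ε hε
  have hfin := hdecay (ε / 2) (by positivity)
  refine ⟨(hfin.toFinset.sup fun α => α.sum fun _ k => k) + 1, fun n hn => ?_⟩
  have hbound : ∀ α, F n α ≤ ε / 2 := by
    intro α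
    rcases le_or_gt ((α.sum fun _ k => k)) (n + d) with hle | hgt
    · rw [hterm0 n α hle]; positivity
    · have hαS : α ∉ hfin.toFinset := by
        intro hmem
        have hsup : (α.sum fun _ k => k) ≤
            hfin.toFinset.sup (fun α : Fin m →₀ ℕ => α.sum fun _ k => k) :=
          Finset.le_sup (f := fun α : Fin m →₀ ℕ => α.sum fun _ k => k) hmem
        omega
      have hsmall : ¬ (ε / 2 ≤ v (c α) * ∏ i, r i ^ (α i)) := by
        intro hcon
        exact hαS (hfin.mem_toFinset.mpr hcon)
      have h2 := htermle n α hgt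
      linarith
  have hub : (⨆ α, F n α) ≤ ε / 2 := Real.iSup_le hbound (by positivity)
  have hlb : 0 ≤ ⨆ α, F n α := Real.iSup_nonneg (hFnonneg n)
  rw [Real.dist_eq, sub_zero, abs_of_nonneg hlb]
  linarith
end

section
/- Suppose G acts F-linearly on two F-vector spaces V and W, with W finite-dimensional over F, and equip V ⊗_F W with the diagonal G-action g·(v⊗w) = (g·v)⊗(g·w). Then the locally finite vectors of V ⊗_F W are exactly V_lf ⊗_F W; that is, (V ⊗_F W)_lf equals the image of V_lf ⊗_F W in V ⊗_F W, i.e. the subspace of elements of the form Σ v_i ⊗ w_i with all v_i ∈ V_lf. -/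
open scoped TensorProduct

/-- A vector `v` of an `F`-vector space `V` with an `F`-linear action of a topological
group `G` is *locally finite* if there are an open subgroup `H ≤ G` and a
finite-dimensional `H`-stable subspace `W ⊆ V` containing `v`. -/
def IsLocallyFiniteVector (F G : Type*) {V : Type*} [Field F] [AddCommGroup V]
    [Module F V] [Group G] [TopologicalSpace G] [DistribMulAction G V] (v : V) : Prop :=
  ∃ H : Subgroup G, IsOpen (H : Set G) ∧
    ∃ W : Submodule F V, v ∈ W ∧ FiniteDimensional F W ∧ ∀ h ∈ H, ∀ w ∈ W, h • w ∈ W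

section Aux

variable {F G V : Type*} [Field F] [AddCommGroup V] [Module F V] [Group G]
  [TopologicalSpace G] [DistribMulAction G V]

lemma isLocallyFiniteVector_zero : IsLocallyFiniteVector F G (0 : V) :=
  ⟨⊤, by simp, ⊥, Submodule.zero_mem _, inferInstance,
    fun h _ w hw => by simp_all [Submodule.mem_bot]⟩

lemma IsLocallyFiniteVector.add {v w : V} (hv : IsLocallyFiniteVector F G v)
    (hw : IsLocallyFiniteVector F G w) : IsLocallyFiniteVector F G (v + w) := by
  obtain ⟨H₁, hH₁, W₁, hv₁, hfd₁, hst₁⟩ := hv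
  obtain ⟨H₂, hH₂, W₂, hw₂, hfd₂, hst₂⟩ := hw
  refine ⟨H₁ ⊓ H₂, ?_, W₁ ⊔ W₂, Submodule.add_mem _ (Submodule.mem_sup_left hv₁)
    (Submodule.mem_sup_right hw₂), ?_, ?_⟩
  · exact hH₁.inter hH₂
  · haveI := hfd₁; haveI := hfd₂; infer_instance
  · rintro h ⟨h1, h2⟩ x hx
    obtain ⟨a, ha, b, hb, rfl⟩ := Submodule.mem_sup.mp hx
    rw [smul_add]
    exact Submodule.add_mem _ (Submodule.mem_sup_left (hst₁ h h1 a ha))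
      (Submodule.mem_sup_right (hst₂ h h2 b hb))

lemma IsLocallyFiniteVector.smul {v : V} (c : F) (hv : IsLocallyFiniteVector F G v) :
    IsLocallyFiniteVector F G (c • v) := by
  obtain ⟨H, hH, W, hv, hfd, hst⟩ := hv
  exact ⟨H, hH, W, Submodule.smul_mem _ c hv, hfd, hst⟩

/-- The locally finite vectors as a submodule. -/
def locallyFiniteSubmodule (F G : Type*) (V : Type*) [Field F] [AddCommGroup V]
    [Module F V] [Group G] [TopologicalSpace G] [DistribMulAction G V] : Submodule F V where
  carrier := {v | IsLocallyFiniteVector F G v}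
  zero_mem' := isLocallyFiniteVector_zero
  add_mem' := IsLocallyFiniteVector.add
  smul_mem' := fun c _ hx => hx.smul c

end Aux

section Contract

variable {F V W : Type*} [Field F] [AddCommGroup V] [Module F V]
  [AddCommGroup W] [Module F W]

/-- Contraction `v ⊗ w ↦ f w • v`. -/
noncomputable def ctrR (f : Module.Dual F W) : V ⊗[F] W →ₗ[F] V :=
  (TensorProduct.rid F V).toLinearMap ∘ₗ LinearMap.lTensor V f

@[simp] lemma ctrR_tmul (f : Module.Dual F W) (v : V) (w : W) :
    ctrR f (v ⊗ₜ[F] w) = f w • v := by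
  simp [ctrR]

lemma ctrR_add (f g : Module.Dual F W) (x : V ⊗[F] W) :
    ctrR (f + g) x = ctrR f x + ctrR g x := by
  simp [ctrR, LinearMap.lTensor_add]

lemma ctrR_smul (c : F) (f : Module.Dual F W) (x : V ⊗[F] W) :
    ctrR (c • f) x = c • ctrR f x := by
  simp [ctrR, LinearMap.lTensor_smul]

lemma ctrR_zero (x : V ⊗[F] W) :
    ctrR (0 : Module.Dual F W) x = (0 : V) := by
  simp [ctrR]

end Contract

section Main

variable {F V W G : Type*} [Field F] [AddCommGroup V] [Module F V]
    [AddCommGroup W] [Module F W] [FiniteDimensional F W]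
    [Group G] [TopologicalSpace G] [IsTopologicalGroup G]
    [DistribMulAction G V] [SMulCommClass G F V]
    [DistribMulAction G W] [SMulCommClass G F W]
    [DistribMulAction G (V ⊗[F] W)] [SMulCommClass G F (V ⊗[F] W)]

lemma ctrR_smul_action
    (hdiag : ∀ (g : G) (v : V) (w : W), g • (v ⊗ₜ[F] w) = (g • v) ⊗ₜ[F] (g • w))
    (g : G) (f : Module.Dual F W) (x : V ⊗[F] W) :
    ctrR f (g • x) =
      g • ctrR (f ∘ₗ DistribMulAction.toLinearMap F W g) x := by
  induction x using TensorProduct.induction_on with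
  | zero => simp
  | tmul v w =>
      rw [hdiag]
      simp only [ctrR_tmul, LinearMap.comp_apply,
        DistribSMul.toLinearMap_apply]
      exact (smul_comm g (f (g • w)) v).symm
  | add a b ha hb =>
      rw [smul_add, map_add, ha, hb, map_add, smul_add]

lemma smul_ctrR
    (hdiag : ∀ (g : G) (v : V) (w : W), g • (v ⊗ₜ[F] w) = (g • v) ⊗ₜ[F] (g • w))
    (h : G) (f : Module.Dual F W) (x : V ⊗[F] W) :
    h • ctrR f x =
      ctrR (f ∘ₗ DistribMulAction.toLinearMap F W h⁻¹) (h • x) := by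
  have := ctrR_smul_action (V := V) hdiag h⁻¹ f (h • x)
  rw [inv_smul_smul] at this
  rw [this, smul_inv_smul]

/-- Coordinates of a locally finite tensor are locally finite. -/
lemma isLocallyFiniteVector_ctrR
    (hdiag : ∀ (g : G) (v : V) (w : W), g • (v ⊗ₜ[F] w) = (g • v) ⊗ₜ[F] (g • w))
    {x : V ⊗[F] W} (hx : IsLocallyFiniteVector F G x) (f : Module.Dual F W) :
    IsLocallyFiniteVector F G (ctrR f x) := by
  classical
  obtain ⟨H, hH, U, hxU, hfd, hst⟩ := hx
  haveI := hfd
  set B := Module.finBasis F W with hB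
  set M : Submodule F V := ⨆ i, U.map (ctrR (B.coord i)) with hM
  -- every contraction of an element of U lies in M
  have hmemM : ∀ (f : Module.Dual F W), ∀ y ∈ U, ctrR f y ∈ M := by
    intro f y hy
    have hf : f ∈ Submodule.span F (Set.range B.coord) := by
      rw [← Module.Basis.coe_dualBasis, B.dualBasis.span_eq]; trivial
    induction hf using Submodule.span_induction with
    | mem g hg =>
        obtain ⟨i, rfl⟩ := hg
        rw [hM]
        exact Submodule.mem_iSup_of_mem i ⟨y, hy, rfl⟩
    | zero => rw [ctrR_zero]; exact M.zero_mem
    | add a b _ _ ha hb => rw [ctrR_add]; exact M.add_mem ha hb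
    | smul c a _ ha => rw [ctrR_smul]; exact M.smul_mem c ha
  refine ⟨H, hH, M, hmemM f x hxU, ?_, ?_⟩
  · rw [hM]; exact Submodule.finiteDimensional_iSup _
  · intro h hh m hm
    rw [hM] at hm
    refine Submodule.iSup_induction (motive := fun m => h • m ∈ M) _ hm ?_ ?_ ?_
    · intro i y hy
      obtain ⟨u, hu, rfl⟩ := hy
      rw [smul_ctrR hdiag]
      exact hmemM _ _ (hst h hh u hu)
    · show h • (0 : V) ∈ M
      rw [smul_zero]; exact M.zero_mem
    · intro a b ha hb
      show h • (a + b) ∈ M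
      rw [smul_add]; exact M.add_mem ha hb

end Main

/-- Let `G` act `F`-linearly on `V` and `W`, with `W`
finite-dimensional, and equip `V ⊗[F] W` with the diagonal `G`-action.  Then the locally
finite vectors of `V ⊗[F] W` are exactly (the span of simple tensors `v ⊗ w` with)
`V_lf ⊗[F] W`. -/
theorem locallyFinite_tensor_finiteDimensional
    {F V W G : Type*} [Field F] [AddCommGroup V] [Module F V]
    [AddCommGroup W] [Module F W] [FiniteDimensional F W]
    [Group G] [TopologicalSpace G] [IsTopologicalGroup G]
    [DistribMulAction G V] [SMulCommClass G F V]
    [DistribMulAction G W] [SMulCommClass G F W]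
    [DistribMulAction G (V ⊗[F] W)] [SMulCommClass G F (V ⊗[F] W)]
    (hdiag : ∀ (g : G) (v : V) (w : W), g • (v ⊗ₜ[F] w) = (g • v) ⊗ₜ[F] (g • w)) :
    {x : V ⊗[F] W | IsLocallyFiniteVector F G x} =
      (Submodule.span F {x : V ⊗[F] W |
        ∃ (v : V) (w : W), IsLocallyFiniteVector F G v ∧ x = v ⊗ₜ[F] w} : Set (V ⊗[F] W)) := by
  classical
  apply Set.Subset.antisymm
  · -- locally finite ⊆ span of lf simple tensors
    intro x hx
    set B := Module.finBasis F W with hB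
    have hxrepr : x = ∑ i, ctrR (B.coord i) x ⊗ₜ[F] B i := by
      have key : (∑ i, ((TensorProduct.mk F V W).flip (B i)) ∘ₗ
          ctrR (B.coord i) : V ⊗[F] W →ₗ[F] V ⊗[F] W) = LinearMap.id := by
        apply TensorProduct.ext'
        intro v w
        simp only [LinearMap.sum_apply, LinearMap.comp_apply, ctrR_tmul,
          LinearMap.flip_apply, TensorProduct.mk_apply, LinearMap.id_apply,
          TensorProduct.smul_tmul, ← TensorProduct.tmul_sum]
        congr 1
        exact B.sum_repr w
      conv_lhs => rw [← LinearMap.id_apply (R := F) x, ← key]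
      simp
    rw [hxrepr]
    refine Submodule.sum_mem _ fun i _ => Submodule.subset_span ?_
    exact ⟨_, _, isLocallyFiniteVector_ctrR hdiag hx (B.coord i), rfl⟩
  · -- span of lf simple tensors ⊆ locally finite
    have hle : Submodule.span F {x : V ⊗[F] W |
        ∃ (v : V) (w : W), IsLocallyFiniteVector F G v ∧ x = v ⊗ₜ[F] w} ≤
        locallyFiniteSubmodule F G (V ⊗[F] W) := by
      rw [Submodule.span_le]
      rintro _ ⟨v, w, hv, rfl⟩
      obtain ⟨H, hH, U, hvU, hfd, hst⟩ := hv
      haveI := hfd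
      refine ⟨H, hH, LinearMap.range (TensorProduct.map U.subtype
        (LinearMap.id : W →ₗ[F] W)), ⟨(⟨v, hvU⟩ : U) ⊗ₜ[F] w, by simp⟩, inferInstance, ?_⟩
      intro h hh x hx
      rw [TensorProduct.range_map_eq_span_tmul] at hx ⊢
      induction hx using Submodule.span_induction with
      | mem y hy =>
          obtain ⟨m, n, rfl⟩ := hy
          rw [show (U.subtype m) ⊗ₜ[F] ((LinearMap.id : W →ₗ[F] W) n) =
            (m : V) ⊗ₜ[F] n from rfl, hdiag]
          exact Submodule.subset_span ⟨⟨h • (m : V), hst h hh m m.2⟩, h • n, rfl⟩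
      | zero => rw [smul_zero]; exact Submodule.zero_mem _
      | add a b _ _ ha hb => rw [smul_add]; exact Submodule.add_mem _ ha hb
      | smul c a _ ha => rw [smul_comm]; exact Submodule.smul_mem _ c ha
    exact fun x hx => hle hx
end

section
/- Let F be a perfect field, A an integral domain containing F as a subfield, G a topological group acting on A by F-algebra automorphisms, and G' a finite group acting on A by F-algebra automorphisms, with the two actions commuting. If the locally finite vectors (with respect to G) of the invariant algebra A^{G'} are exactly F, i.e. (A^{G'})_lf = F, then the set A_lf of locally finite vectors of A is a field and a finite field extension of F. -/
section aux

variable {F A G : Type*} [Field F] [CommRing A] [Algebra F A]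
  [Group G] [TopologicalSpace G]
  [MulSemiringAction G A] [SMulCommClass G F A]

lemma lf_algebraMap (c : F) : IsLocallyFiniteVector F G (algebraMap F A c) := by
  refine ⟨⊤, by rw [Subgroup.coe_top]; exact isOpen_univ,
    Submodule.span F {algebraMap F A c}, Submodule.mem_span_singleton_self _,
    FiniteDimensional.span_of_finite F (Set.finite_singleton _), ?_⟩
  intro h _ w hw
  rw [Submodule.mem_span_singleton] at hw
  obtain ⟨t, rfl⟩ := hw
  rw [smul_comm, smul_algebraMap]
  exact Submodule.smul_mem _ _ (Submodule.mem_span_singleton_self _)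

lemma lf_add {a b : A} (ha : IsLocallyFiniteVector F G a) (hb : IsLocallyFiniteVector F G b) :
    IsLocallyFiniteVector F G (a + b) := by
  obtain ⟨H1, hH1, W1, haW, hfd1, hst1⟩ := ha
  obtain ⟨H2, hH2, W2, hbW, hfd2, hst2⟩ := hb
  haveI := hfd1; haveI := hfd2
  refine ⟨H1 ⊓ H2, by rw [Subgroup.coe_inf]; exact hH1.inter hH2, W1 ⊔ W2,
    Submodule.add_mem _ (Submodule.mem_sup_left haW) (Submodule.mem_sup_right hbW),
    Submodule.finiteDimensional_sup W1 W2, ?_⟩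
  intro h hh w hw
  obtain ⟨w1, h1, w2, h2, rfl⟩ := Submodule.mem_sup.mp hw
  rw [smul_add]
  exact Submodule.add_mem _
    (Submodule.mem_sup_left (hst1 h (Subgroup.mem_inf.mp hh).1 _ h1))
    (Submodule.mem_sup_right (hst2 h (Subgroup.mem_inf.mp hh).2 _ h2))

lemma lf_mul {a b : A} (ha : IsLocallyFiniteVector F G a) (hb : IsLocallyFiniteVector F G b) :
    IsLocallyFiniteVector F G (a * b) := by
  obtain ⟨H1, hH1, W1, haW, hfd1, hst1⟩ := ha
  obtain ⟨H2, hH2, W2, hbW, hfd2, hst2⟩ := hb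
  haveI := hfd1; haveI := hfd2
  refine ⟨H1 ⊓ H2, by rw [Subgroup.coe_inf]; exact hH1.inter hH2, W1 * W2,
    Submodule.mul_mem_mul haW hbW,
    Module.Finite.iff_fg.mpr ((Module.Finite.iff_fg.mp hfd1).mul (Module.Finite.iff_fg.mp hfd2)),
    ?_⟩
  intro h hh w hw
  refine Submodule.mul_induction_on (C := fun r => h • r ∈ W1 * W2) hw ?_ ?_
  · intro m hm n hn
    rw [smul_mul']
    exact Submodule.mul_mem_mul (hst1 h (Subgroup.mem_inf.mp hh).1 _ hm)
      (hst2 h (Subgroup.mem_inf.mp hh).2 _ hn)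
  · intro x y hx hy
    rw [smul_add]
    exact Submodule.add_mem _ hx hy

lemma lf_smul_comm {G' : Type*} [Group G'] [MulSemiringAction G' A] [SMulCommClass G' F A]
    (hcomm : ∀ (g : G) (g' : G') (a : A), g • g' • a = g' • g • a)
    (g' : G') {a : A} (ha : IsLocallyFiniteVector F G a) :
    IsLocallyFiniteVector F G (g' • a) := by
  obtain ⟨H, hH, W, haW, hfd, hst⟩ := ha
  haveI := hfd
  refine ⟨H, hH, W.map (DistribMulAction.toLinearMap F A g'),
    ⟨a, haW, rfl⟩, inferInstance, ?_⟩
  intro h hh w hw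
  obtain ⟨x, hx, rfl⟩ := hw
  exact ⟨h • x, hst h hh x hx, (hcomm h g' x).symm⟩

end aux

set_option synthInstance.maxHeartbeats 400000 in
/-- Let `F` be a perfect field, `A` an integral domain containing `F`
as a subfield, `G` a topological group acting on `A` by `F`-algebra automorphisms, and
`G'` a finite group acting on `A` by `F`-algebra automorphisms, the two actions
commuting.  If the locally finite vectors (with respect to `G`) of the invariant
algebra `A^{G'}` are exactly `F`, then the set `A_lf` of locally finite vectors of `A`
is a field which is a finite field extension of `F`. -/
theorem locallyFinite_isField_and_finite
    {F A G G' : Type*} [Field F] [PerfectField F]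
    [CommRing A] [IsDomain A] [Algebra F A]
    [Group G] [TopologicalSpace G] [IsTopologicalGroup G]
    [MulSemiringAction G A] [SMulCommClass G F A]
    [Group G'] [Finite G'] [MulSemiringAction G' A] [SMulCommClass G' F A]
    (hcomm : ∀ (g : G) (g' : G') (a : A), g • g' • a = g' • g • a)
    (hinv : {a : A | (∀ g' : G', g' • a = a) ∧ IsLocallyFiniteVector F G a} =
      Set.range (algebraMap F A)) :
    ∃ K : Subalgebra F A, (K : Set A) = {a : A | IsLocallyFiniteVector F G a} ∧
      IsField K ∧ FiniteDimensional F K := by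
  classical
  haveI : Fintype G' := Fintype.ofFinite G'
  -- the subalgebra of locally finite vectors
  let K : Subalgebra F A :=
  { carrier := {a : A | IsLocallyFiniteVector F G a}
    mul_mem' := fun ha hb => lf_mul ha hb
    add_mem' := fun ha hb => lf_add ha hb
    one_mem' := by simpa using lf_algebraMap (G := G) (A := A) (1 : F)
    zero_mem' := by simpa using lf_algebraMap (G := G) (A := A) (0 : F)
    algebraMap_mem' := lf_algebraMap }
  have hKstab : ∀ (g' : G') (a : A), a ∈ K → g' • a ∈ K :=
    fun g' a ha => lf_smul_comm hcomm g' ha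
  have hrange : ∀ a : A, a ∈ K → (∀ g' : G', g' • a = a) →
      ∃ c : F, algebraMap F A c = a := by
    intro a haK hfix
    have : a ∈ Set.range (algebraMap F A) := by rw [← hinv]; exact ⟨hfix, haK⟩
    exact this
  -- the action of `G'` on `K`
  letI : SMul G' K := ⟨fun g' a => ⟨g' • (a : A), hKstab g' _ a.2⟩⟩
  have smul_coe : ∀ (g' : G') (a : K), ((g' • a : K) : A) = g' • (a : A) := fun _ _ => rfl
  letI : MulSemiringAction G' K :=
  { one_smul := fun a => Subtype.ext (by rw [smul_coe, one_smul])
    mul_smul := fun g h a => Subtype.ext (by rw [smul_coe, smul_coe, smul_coe, mul_smul])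
    smul_zero := fun g => Subtype.ext (by rw [smul_coe]; exact smul_zero g)
    smul_add := fun g a b => Subtype.ext (by rw [smul_coe]; exact smul_add g (a : A) (b : A))
    smul_one := fun g => Subtype.ext (by rw [smul_coe]; exact smul_one g)
    smul_mul := fun g a b => Subtype.ext (by rw [smul_coe]; exact smul_mul' g (a : A) (b : A)) }
  -- `K` is a field
  have hIsField : IsField K := by
    refine ⟨⟨0, 1, fun h => zero_ne_one (congrArg Subtype.val h)⟩, mul_comm, ?_⟩
    intro a ha0
    have ha0' : (a : A) ≠ 0 := fun h => ha0 (Subtype.ext h)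
    set N : A := ∏ g' : G', g' • (a : A) with hN
    have hNK : N ∈ K := Subalgebra.prod_mem K fun g' _ => hKstab g' _ a.2
    have hNfix : ∀ h : G', h • N = N := by
      intro h
      have h1 : h • N = ∏ g' : G', h • (g' • (a : A)) :=
        map_prod (MulSemiringAction.toRingHom G' A h) _ _
      rw [h1]
      calc ∏ g' : G', h • g' • (a : A) = ∏ g' : G', (h * g') • (a : A) := by
            simp [mul_smul]
        _ = ∏ g' : G', g' • (a : A) :=
            Fintype.prod_equiv (Equiv.mulLeft h) _ _ (fun x => rfl)
    obtain ⟨c, hc⟩ := hrange N hNK hNfix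
    have hNne : N ≠ 0 := by
      rw [hN]
      refine Finset.prod_ne_zero_iff.mpr fun g' _ h0 => ha0' ?_
      have := congrArg (fun x => g'⁻¹ • x) h0
      simpa using this
    have hcne : c ≠ 0 := by
      rintro rfl
      rw [map_zero] at hc
      exact hNne hc.symm
    -- the inverse
    set P : A := ∏ g' ∈ Finset.univ.erase (1 : G'), g' • (a : A) with hP
    have hPK : P ∈ K := Subalgebra.prod_mem K fun g' _ => hKstab g' _ a.2
    have haP : (a : A) * P = N := by
      rw [hN, hP, ← Finset.mul_prod_erase Finset.univ _ (Finset.mem_univ (1 : G')), one_smul]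
    refine ⟨⟨c⁻¹ • P, K.smul_mem hPK c⁻¹⟩, Subtype.ext ?_⟩
    show (a : A) * (c⁻¹ • P) = 1
    rw [mul_smul_comm, haP, ← hc, Algebra.algebraMap_eq_smul_one, smul_smul,
      inv_mul_cancel₀ hcne, one_smul]
  -- `K` is finite dimensional over `F`
  letI : Field K := hIsField.toField
  haveI : FiniteDimensional (FixedPoints.subfield G' K) K := inferInstance
  obtain ⟨S, hS⟩ := (Module.finite_def.mp
    (inferInstance : Module.Finite (FixedPoints.subfield G' K) K))
  have hspanF : Submodule.span F (S : Set K) = ⊤ := by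
    rw [eq_top_iff]
    intro x hx0
    clear hx0
    have hx : x ∈ Submodule.span (FixedPoints.subfield G' K) (S : Set K) := by
      rw [hS]; trivial
    induction hx using Submodule.span_induction with
    | mem y hy => exact Submodule.subset_span hy
    | zero => exact zero_mem _
    | add y z _ _ hy hz => exact add_mem hy hz
    | smul e y _ hy =>
        have hefix : ∀ g' : G', g' • ((e : K) : A) = ((e : K) : A) := by
          intro g'
          have := e.2 g'
          exact congrArg Subtype.val this
        obtain ⟨c, hc⟩ := hrange ((e : K) : A) (e : K).2 hefix
        have he : (e : K) = algebraMap F K c := by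
          apply Subtype.ext
          rw [← hc]; rfl
        have h1 : e • y = (e : K) * y := by
          rw [Algebra.smul_def, FixedPoints.coe_algebraMap]; rfl
        rw [h1, he, ← Algebra.smul_def]
        exact Submodule.smul_mem _ c hy
  have hfd : FiniteDimensional F K := ⟨⟨S, hspanF⟩⟩
  exact ⟨K, rfl, hIsField, hfd⟩
end
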